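/- The elements x^{pr} and y^{pr} belong to the center of H. -/

import Mathlib

open scoped BigOperators

noncomputable section

universe u

/-- The defining relations of the rank-1 rational Cherednik algebra `H_t`:
`s ^ r = 1`, `s x = ε⁻¹ x s`, `s y = ε y s`, `y x - x y = t - ∑_{j=1}^{r-1} c_j s^j`. -/
inductive CherednikRel (k : Type u) [Field k] (r : ℕ) (ε t : k) (c : ℕ → k) :
    FreeAlgebra k (Fin 3) → FreeAlgebra k (Fin 3) → Prop
  | spow : CherednikRel k r ε t c (FreeAlgebra.ι k (2 : Fin 3) ^ r) 1
  | sx : CherednikRel k r ε t c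
      (FreeAlgebra.ι k (2 : Fin 3) * FreeAlgebra.ι k (0 : Fin 3))
      (ε⁻¹ • (FreeAlgebra.ι k (0 : Fin 3) * FreeAlgebra.ι k (2 : Fin 3)))
  | sy : CherednikRel k r ε t c
      (FreeAlgebra.ι k (2 : Fin 3) * FreeAlgebra.ι k (1 : Fin 3))
      (ε • (FreeAlgebra.ι k (1 : Fin 3) * FreeAlgebra.ι k (2 : Fin 3)))
  | yx : CherednikRel k r ε t c
      (FreeAlgebra.ι k (1 : Fin 3) * FreeAlgebra.ι k (0 : Fin 3) -
        FreeAlgebra.ι k (0 : Fin 3) * FreeAlgebra.ι k (1 : Fin 3))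
      (algebraMap k (FreeAlgebra k (Fin 3)) t -
        ∑ j ∈ Finset.Icc 1 (r - 1), c j • FreeAlgebra.ι k (2 : Fin 3) ^ j)

/-- The rank-1 rational Cherednik algebra `H_t` over `k`, with parameters
`r`, primitive root `ε`, `t`, and `c`. -/
abbrev Cherednik (k : Type u) [Field k] (r : ℕ) (ε t : k) (c : ℕ → k) : Type u :=
  RingQuot (CherednikRel k r ε t c)

/-- The generator `x` of `H_t`. -/
def Hx (k : Type u) [Field k] (r : ℕ) (ε t : k) (c : ℕ → k) : Cherednik k r ε t c :=
  RingQuot.mkAlgHom k (CherednikRel k r ε t c) (FreeAlgebra.ι k (0 : Fin 3))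

/-- The generator `y` of `H_t`. -/
def Hy (k : Type u) [Field k] (r : ℕ) (ε t : k) (c : ℕ → k) : Cherednik k r ε t c :=
  RingQuot.mkAlgHom k (CherednikRel k r ε t c) (FreeAlgebra.ι k (1 : Fin 3))

/-- The generator `s` of `H_t`. -/
def Hs (k : Type u) [Field k] (r : ℕ) (ε t : k) (c : ℕ → k) : Cherednik k r ε t c :=
  RingQuot.mkAlgHom k (CherednikRel k r ε t c) (FreeAlgebra.ι k (2 : Fin 3))

/-- The element `h = x y - ∑_{j=1}^{r-1} c_j (1 - ε^{-j})⁻¹ s^j` of `H_t`. -/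
def Hh (k : Type u) [Field k] (r : ℕ) (ε t : k) (c : ℕ → k) : Cherednik k r ε t c :=
  Hx k r ε t c * Hy k r ε t c -
    ∑ j ∈ Finset.Icc 1 (r - 1), (c j * (1 - (ε ^ j)⁻¹)⁻¹) • Hs k r ε t c ^ j

section Aux

variable {k : Type u} [Field k]

/-- If `a * b = q • (b * a)`, then `a ^ n * b = q ^ n • (b * a ^ n)`. -/
lemma Cherednik.swap_pow_left {A : Type u} [Ring A] [Algebra k A] {a b : A} {q : k}
    (h : a * b = q • (b * a)) : ∀ n : ℕ, a ^ n * b = q ^ n • (b * a ^ n) := by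
  intro n
  induction n with
  | zero => simp
  | succ n ih =>
    calc a ^ (n+1) * b = a ^ n * (a * b) := by rw [pow_succ, mul_assoc]
    _ = q • (a ^ n * b * a) := by rw [h, mul_smul_comm, mul_assoc]
    _ = q • ((q ^ n • (b * a ^ n)) * a) := by rw [ih]
    _ = (q ^ (n+1)) • (b * a ^ (n+1)) := by
        rw [smul_mul_assoc, smul_smul, mul_assoc, ← pow_succ, ← pow_succ']

/-- If `a * b = q • (b * a)`, then `a * b ^ n = q ^ n • (b ^ n * a)`. -/
lemma Cherednik.swap_pow_right {A : Type u} [Ring A] [Algebra k A] {a b : A} {q : k}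
    (h : a * b = q • (b * a)) : ∀ n : ℕ, a * b ^ n = q ^ n • (b ^ n * a) := by
  intro n
  induction n with
  | zero => simp
  | succ n ih =>
    calc a * b ^ (n+1) = (a * b) * b ^ n := by rw [pow_succ', ← mul_assoc]
    _ = q • (b * (a * b ^ n)) := by rw [h, smul_mul_assoc, mul_assoc]
    _ = q • (b * (q ^ n • (b ^ n * a))) := by rw [ih]
    _ = (q ^ (n+1)) • (b ^ (n+1) * a) := by
        rw [mul_smul_comm, smul_smul, ← mul_assoc, ← pow_succ', ← pow_succ']

/-- The commutator of `Y` with powers of `X` in an algebra with Cherednik-type relations. -/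
lemma Cherednik.comm_pow_formula {A : Type u} [Ring A] [Algebra k A] {X Y S : A} {q t₀ : k}
    {c : ℕ → k} {F : Finset ℕ}
    (hYX : Y * X = X * Y + t₀ • (1 : A) - ∑ j ∈ F, c j • S ^ j)
    (hSX : ∀ j : ℕ, S ^ j * X = q ^ j • (X * S ^ j)) :
    ∀ n : ℕ, Y * X ^ (n + 1) = X ^ (n + 1) * Y + (((n + 1 : ℕ) : k) * t₀) • X ^ n
      - ∑ j ∈ F, (c j * ∑ i ∈ Finset.range (n + 1), (q ^ j) ^ i) • (X ^ n * S ^ j) := by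
  intro n
  induction n with
  | zero => simpa using hYX
  | succ n ih =>
    have key : ∀ j : ℕ, X ^ n * S ^ j * X = q ^ j • (X ^ (n + 1) * S ^ j) := by
      intro j
      rw [mul_assoc, hSX j, mul_smul_comm, ← mul_assoc, ← pow_succ]
    calc Y * X ^ (n + 2) = (Y * X ^ (n + 1)) * X := by rw [pow_succ, ← mul_assoc]
    _ = X ^ (n + 1) * Y * X + (((n + 1 : ℕ) : k) * t₀) • (X ^ n * X)
        - (∑ j ∈ F, (c j * ∑ i ∈ Finset.range (n + 1), (q ^ j) ^ i) • (X ^ n * S ^ j)) * X := by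
        rw [ih, sub_mul, add_mul, smul_mul_assoc, mul_assoc]
    _ = X ^ (n + 1) * (Y * X) + (((n + 1 : ℕ) : k) * t₀) • X ^ (n + 1)
        - ∑ j ∈ F, ((c j * ∑ i ∈ Finset.range (n + 1), (q ^ j) ^ i) * q ^ j) •
            (X ^ (n + 1) * S ^ j) := by
        rw [mul_assoc, ← pow_succ, Finset.sum_mul]
        congr 1
        apply Finset.sum_congr rfl
        intro j _
        rw [smul_mul_assoc, mul_assoc, mul_assoc, ← mul_assoc (X ^ n), key j, smul_smul,
          mul_assoc]
    _ = X ^ (n + 2) * Y + t₀ • X ^ (n + 1) - ∑ j ∈ F, c j • (X ^ (n + 1) * S ^ j)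
        + (((n + 1 : ℕ) : k) * t₀) • X ^ (n + 1)
        - ∑ j ∈ F, ((c j * ∑ i ∈ Finset.range (n + 1), (q ^ j) ^ i) * q ^ j) •
            (X ^ (n + 1) * S ^ j) := by
        rw [hYX, mul_sub, mul_add, Finset.mul_sum, ← mul_assoc, ← pow_succ, mul_smul_comm,
          mul_one]
        simp only [mul_smul_comm]
    _ = X ^ (n + 2) * Y + (((n + 2 : ℕ) : k) * t₀) • X ^ (n + 1)
        - ∑ j ∈ F, (c j * ∑ i ∈ Finset.range (n + 2), (q ^ j) ^ i) •
            (X ^ (n + 1) * S ^ j) := by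
        have hsum : ∑ j ∈ F, (c j * ∑ i ∈ Finset.range (n + 2), (q ^ j) ^ i) •
              (X ^ (n + 1) * S ^ j)
            = ∑ j ∈ F, c j • (X ^ (n + 1) * S ^ j)
              + ∑ j ∈ F, ((c j * ∑ i ∈ Finset.range (n + 1), (q ^ j) ^ i) * q ^ j) •
                  (X ^ (n + 1) * S ^ j) := by
          rw [← Finset.sum_add_distrib]
          apply Finset.sum_congr rfl
          intro j _
          rw [← add_smul]
          congr 1
          rw [geom_sum_succ]
          ring
        have hsc : (((n + 2 : ℕ) : k) * t₀) • X ^ (n + 1)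
            = t₀ • X ^ (n + 1) + (((n + 1 : ℕ) : k) * t₀) • X ^ (n + 1) := by
          rw [← add_smul]
          congr 1
          push_cast
          ring
        rw [hsum, hsc]
        abel

variable (r : ℕ) (ε t : k) (c : ℕ → k)

lemma Cherednik.hsr : Hs k r ε t c ^ r = 1 := by
  have h := RingQuot.mkAlgHom_rel k (CherednikRel.spow (k := k) (r := r) (ε := ε) (t := t) (c := c))
  simpa [Hs, map_pow, map_one] using h

lemma Cherednik.hsx : Hs k r ε t c * Hx k r ε t c = ε⁻¹ • (Hx k r ε t c * Hs k r ε t c) := by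
  have h := RingQuot.mkAlgHom_rel k (CherednikRel.sx (k := k) (r := r) (ε := ε) (t := t) (c := c))
  simpa [Hs, Hx, map_mul, map_smul] using h

lemma Cherednik.hsy : Hs k r ε t c * Hy k r ε t c = ε • (Hy k r ε t c * Hs k r ε t c) := by
  have h := RingQuot.mkAlgHom_rel k (CherednikRel.sy (k := k) (r := r) (ε := ε) (t := t) (c := c))
  simpa [Hs, Hy, map_mul, map_smul] using h

lemma Cherednik.hyx : Hy k r ε t c * Hx k r ε t c =
    Hx k r ε t c * Hy k r ε t c + algebraMap k _ t -
      ∑ j ∈ Finset.Icc 1 (r - 1), c j • Hs k r ε t c ^ j := by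
  have h := RingQuot.mkAlgHom_rel k (CherednikRel.yx (k := k) (r := r) (ε := ε) (t := t) (c := c))
  simp only [map_sub, map_mul, map_sum, map_smul, map_pow, AlgHom.commutes] at h
  rw [sub_eq_sub_iff_add_eq_add] at h
  rw [← Hx, ← Hy, ← Hs] at h
  linear_combination (norm := abel) h

/-- An element commuting with the three generators is central. -/
lemma Cherednik.mem_center_of (a : Cherednik k r ε t c)
    (h1 : Hx k r ε t c * a = a * Hx k r ε t c)
    (h2 : Hy k r ε t c * a = a * Hy k r ε t c)
    (h3 : Hs k r ε t c * a = a * Hs k r ε t c) :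
    a ∈ Subring.center (Cherednik k r ε t c) := by
  rw [Subring.mem_center_iff]
  intro g
  obtain ⟨f, rfl⟩ := RingQuot.mkAlgHom_surjective k (CherednikRel k r ε t c) g
  induction f using FreeAlgebra.induction with
  | grade0 t' =>
    rw [AlgHom.commutes]
    exact Algebra.commutes t' a
  | grade1 i =>
    fin_cases i
    · exact h1
    · exact h2
    · exact h3
  | mul f g hf hg =>
    rw [map_mul, mul_assoc, hg, ← mul_assoc, hf, mul_assoc]
  | add f g hf hg =>
    rw [map_add, add_mul, mul_add, hf, hg]

/-- A geometric sum of a nontrivial root of unity vanishes. -/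
lemma Cherednik.geo_zero {z : k} {N : ℕ} (hz1 : z ≠ 1) (hzN : z ^ N = 1) :
    ∑ i ∈ Finset.range N, z ^ i = 0 := by
  rw [geom_sum_eq hz1, hzN, sub_self, zero_div]

end Aux

/-- Lemma 3.2: `x^{pr}` and `y^{pr}` belong to the center of `H`. -/
theorem stmt10 (k : Type u) [Field k] (p : ℕ) (hp : p.Prime) [CharP k p]
    (r : ℕ) (hr : 1 ≤ r) (hpr : ¬ p ∣ r) (ε : k) (hε : IsPrimitiveRoot ε r)
    (c : ℕ → k) :
    Hx k r ε 1 c ^ (p * r) ∈ Subring.center (Cherednik k r ε 1 c) ∧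
    Hy k r ε 1 c ^ (p * r) ∈ Subring.center (Cherednik k r ε 1 c) := by
  set X := Hx k r ε 1 c with hX
  set Y := Hy k r ε 1 c with hY
  set S := Hs k r ε 1 c with hS
  have hεr : ε ^ r = 1 := hε.pow_eq_one
  have hεinv_r : (ε⁻¹) ^ r = 1 := by rw [inv_pow, hεr, inv_one]
  have hcast : ((p * r : ℕ) : k) = 0 := by
    rw [Nat.cast_mul, CharP.cast_eq_zero k p, zero_mul]
  -- the two basic q-commutation relations
  have hsx := Cherednik.hsx r ε 1 c
  have hsy := Cherednik.hsy r ε 1 c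
  -- powers of S commute past X and Y
  have hSjX : ∀ j : ℕ, S ^ j * X = (ε⁻¹) ^ j • (X * S ^ j) :=
    Cherednik.swap_pow_left hsx
  have hSjY : ∀ j : ℕ, S ^ j * Y = ε ^ j • (Y * S ^ j) :=
    Cherednik.swap_pow_left hsy
  -- roots of unity attached to j ∈ Icc 1 (r-1) are nontrivial
  have hεj : ∀ j ∈ Finset.Icc 1 (r - 1), ε ^ j ≠ 1 := by
    intro j hj
    rw [Finset.mem_Icc] at hj
    exact hε.pow_ne_one_of_pos_of_lt (by omega) (by omega)
  have hεinvj : ∀ j ∈ Finset.Icc 1 (r - 1), (ε⁻¹) ^ j ≠ 1 := by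
    intro j hj
    rw [inv_pow, ne_eq, inv_eq_one]
    exact hεj j hj
  have hεjr : ∀ j : ℕ, (ε ^ j) ^ (p * r) = 1 := by
    intro j
    have hexp : j * (p * r) = r * (p * j) := by ring
    rw [← pow_mul, hexp, pow_mul, hεr, one_pow]
  have hεinvjr : ∀ j : ℕ, ((ε⁻¹) ^ j) ^ (p * r) = 1 := by
    intro j
    have hexp : j * (p * r) = r * (p * j) := by ring
    rw [← pow_mul, hexp, pow_mul, hεinv_r, one_pow]
  -- write p * r = n + 1
  obtain ⟨n, hn⟩ : ∃ n, p * r = n + 1 :=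
    Nat.exists_eq_succ_of_ne_zero (Nat.mul_ne_zero hp.pos.ne' (by omega))
  -- the defining yx relation, in the smul form
  have hYXrel : Y * X = X * Y + (1 : k) • (1 : Cherednik k r ε 1 c) -
      ∑ j ∈ Finset.Icc 1 (r - 1), c j • S ^ j := by
    have := Cherednik.hyx r ε 1 c
    rw [map_one] at this
    simpa using this
  have hXYrel : X * Y = Y * X + (-1 : k) • (1 : Cherednik k r ε 1 c) -
      ∑ j ∈ Finset.Icc 1 (r - 1), (-(c j)) • S ^ j := by
    have hneg : ∀ j : ℕ, (-(c j)) • Hs k r ε 1 c ^ j = -(c j • Hs k r ε 1 c ^ j) :=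
      fun j => neg_smul (c j) (Hs k r ε 1 c ^ j)
    have hsum : ∑ j ∈ Finset.Icc 1 (r - 1), (-(c j)) • Hs k r ε 1 c ^ j
        = -∑ j ∈ Finset.Icc 1 (r - 1), c j • Hs k r ε 1 c ^ j := by
      rw [← Finset.sum_neg_distrib]
      exact Finset.sum_congr rfl fun j _ => hneg j
    rw [hYXrel, hsum, neg_smul _ (1 : Cherednik k r ε 1 c), one_smul]
    rw [← hS]
    abel
  constructor
  · -- X ^ (p * r) is central
    apply Cherednik.mem_center_of
    · exact ((Commute.refl X).pow_right (p * r)).eq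
    · -- Y commutes with X ^ (p * r)
      have h := Cherednik.comm_pow_formula hYXrel hSjX n
      rw [← hn] at h
      rw [h, hcast, zero_mul, zero_smul]
      have hzero : ∑ j ∈ Finset.Icc 1 (r - 1),
          (c j * ∑ i ∈ Finset.range (p * r), ((ε⁻¹) ^ j) ^ i) • (X ^ n * S ^ j) = 0 := by
        apply Finset.sum_eq_zero
        intro j hj
        rw [Cherednik.geo_zero (hεinvj j hj) (hεinvjr j), mul_zero, zero_smul]
      rw [hzero, add_zero, sub_zero]
    · -- S commutes with X ^ (p * r)
      have h := Cherednik.swap_pow_right hsx (p * r)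
      have h1 : (ε⁻¹ : k) ^ (p * r) = 1 := by rw [pow_mul', hεinv_r, one_pow]
      rw [h, h1, one_smul]
  · -- Y ^ (p * r) is central
    apply Cherednik.mem_center_of
    · -- X commutes with Y ^ (p * r)
      have h := Cherednik.comm_pow_formula hXYrel hSjY n
      rw [← hn] at h
      rw [h, hcast, zero_mul, zero_smul]
      have hzero : ∑ j ∈ Finset.Icc 1 (r - 1),
          (-(c j) * ∑ i ∈ Finset.range (p * r), (ε ^ j) ^ i) • (Y ^ n * S ^ j) = 0 := by
        apply Finset.sum_eq_zero
        intro j hj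
        rw [Cherednik.geo_zero (hεj j hj) (hεjr j), mul_zero, zero_smul]
      rw [hzero, add_zero, sub_zero]
    · exact ((Commute.refl Y).pow_right (p * r)).eq
    · -- S commutes with Y ^ (p * r)
      have h := Cherednik.swap_pow_right hsy (p * r)
      have h1 : ε ^ (p * r) = 1 := by rw [pow_mul', hεr, one_pow]
      rw [h, h1, one_smul]
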